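/- arXiv:math/0311432 — 2 statements merged into one kernel-verified Lean document; each statement's English description precedes it below -/
import Mathlib

section
/- With h, L, M, N as in the context, the following asymptotic expansions hold as (u,v) → (0,0): L(u,v) = −b·v − (B/2)u² − (C − k³)uv − (D/2)v² + o(u² + v²), M(u,v) = (b − a)u + c·v + ((C − A)/2 + k³)u² + (D − B)uv + ((E − C)/2 − k³)v² + o(u² + v²), and N(u,v) = b·v + (B/2)u² + (C − k³)uv + (D/2)v² + o(u² + v²). -/
open Asymptotics Filter Topology

noncomputable section

/-- The Monge chart `h` at an umbilic point (coefficient of `u²v` normalized to 0). -/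
def hFun (k a b c A B C D E u v : ℝ) : ℝ :=
  k / 2 * (u ^ 2 + v ^ 2) + a / 6 * u ^ 3 + b / 2 * u * v ^ 2 + c / 6 * v ^ 3
    + A / 24 * u ^ 4 + B / 6 * u ^ 3 * v + C / 4 * u ^ 2 * v ^ 2
    + D / 6 * u * v ^ 3 + E / 24 * v ^ 4

/-- Partial derivative `h_u`. -/
def h_u (k a b c A B C D E u v : ℝ) : ℝ := deriv (fun x => hFun k a b c A B C D E x v) u

/-- Partial derivative `h_v`. -/
def h_v (k a b c A B C D E u v : ℝ) : ℝ := deriv (fun y => hFun k a b c A B C D E u y) v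

/-- Partial derivative `h_uu`. -/
def h_uu (k a b c A B C D E u v : ℝ) : ℝ := deriv (fun x => h_u k a b c A B C D E x v) u

/-- Partial derivative `h_uv`. -/
def h_uv (k a b c A B C D E u v : ℝ) : ℝ := deriv (fun y => h_u k a b c A B C D E u y) v

/-- Partial derivative `h_vv`. -/
def h_vv (k a b c A B C D E u v : ℝ) : ℝ := deriv (fun y => h_v k a b c A B C D E u y) v

/-- Coefficient `L = h_u h_v h_vv − (1+h_v²) h_uv` of the principal-line equation. -/
def eqL (k a b c A B C D E u v : ℝ) : ℝ :=
  h_u k a b c A B C D E u v * h_v k a b c A B C D E u v * h_vv k a b c A B C D E u v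
    - (1 + h_v k a b c A B C D E u v ^ 2) * h_uv k a b c A B C D E u v

/-- Coefficient `M = (1+h_u²) h_vv − (1+h_v²) h_uu` of the principal-line equation. -/
def eqM (k a b c A B C D E u v : ℝ) : ℝ :=
  (1 + h_u k a b c A B C D E u v ^ 2) * h_vv k a b c A B C D E u v
    - (1 + h_v k a b c A B C D E u v ^ 2) * h_uu k a b c A B C D E u v

/-- Coefficient `N = (1+h_u²) h_uv − h_u h_v h_uu` of the principal-line equation. -/
def eqN (k a b c A B C D E u v : ℝ) : ℝ :=
  (1 + h_u k a b c A B C D E u v ^ 2) * h_uv k a b c A B C D E u v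
    - h_u k a b c A B C D E u v * h_v k a b c A B C D E u v * h_uu k a b c A B C D E u v

/-- `T(u,v,p) = L p² + M p + N`, the lifted principal-line equation. -/
def eqT (k a b c A B C D E u v p : ℝ) : ℝ :=
  eqL k a b c A B C D E u v * p ^ 2 + eqM k a b c A B C D E u v * p + eqN k a b c A B C D E u v

/-- Partial derivative `T_u`. -/
def eqT_u (k a b c A B C D E u v p : ℝ) : ℝ := deriv (fun x => eqT k a b c A B C D E x v p) u

/-- Partial derivative `T_v`. -/
def eqT_v (k a b c A B C D E u v p : ℝ) : ℝ := deriv (fun y => eqT k a b c A B C D E u y p) v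

/-- Partial derivative `T_p`. -/
def eqT_p (k a b c A B C D E u v p : ℝ) : ℝ := deriv (fun q => eqT k a b c A B C D E u v q) p

/-- The Lie–Cartan vector field `X(u,v,p) = (T_p, p T_p, −(T_u + p T_v))` on `ℝ³ = ℝ×ℝ×ℝ`. -/
def lieCartan (k a b c A B C D E : ℝ) (w : ℝ × ℝ × ℝ) : ℝ × ℝ × ℝ :=
  (eqT_p k a b c A B C D E w.1 w.2.1 w.2.2,
   w.2.2 * eqT_p k a b c A B C D E w.1 w.2.1 w.2.2,
   -(eqT_u k a b c A B C D E w.1 w.2.1 w.2.2 + w.2.2 * eqT_v k a b c A B C D E w.1 w.2.1 w.2.2))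

/-- The Lie–Cartan vector field, as a map `(Fin 3 → ℝ) → (Fin 3 → ℝ)`. -/
def lieCartan3 (k a b c A B C D E : ℝ) (w : Fin 3 → ℝ) : Fin 3 → ℝ :=
  ![eqT_p k a b c A B C D E (w 0) (w 1) (w 2),
    w 2 * eqT_p k a b c A B C D E (w 0) (w 1) (w 2),
    -(eqT_u k a b c A B C D E (w 0) (w 1) (w 2)
        + w 2 * eqT_v k a b c A B C D E (w 0) (w 1) (w 2))]

private lemma hasDerivAt_poly4 (c0 c1 c2 c3 c4 x : ℝ) :
    HasDerivAt (fun t : ℝ => c0 + c1 * t + c2 * t ^ 2 + c3 * t ^ 3 + c4 * t ^ 4)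
      (c1 + 2 * c2 * x + 3 * c3 * x ^ 2 + 4 * c4 * x ^ 3) x := by
  have h := ((((hasDerivAt_const x c0).add ((hasDerivAt_id' x).const_mul c1)).add
      ((hasDerivAt_pow 2 x).const_mul c2)).add ((hasDerivAt_pow 3 x).const_mul c3)).add
      ((hasDerivAt_pow 4 x).const_mul c4)
  refine h.congr_deriv ?_
  push_cast; ring

private lemma hu_eq (k a b c A B C D E u v : ℝ) :
    h_u k a b c A B C D E u v
      = k*u + a/2*u^2 + b/2*v^2 + A/6*u^3 + B/2*u^2*v + C/2*u*v^2 + D/6*v^3 := by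
  unfold h_u
  have h1 : (fun x => hFun k a b c A B C D E x v)
      = fun t : ℝ => (k/2*v^2 + c/6*v^3 + E/24*v^4) + (b/2*v^2 + D/6*v^3) * t
          + (k/2 + C/4*v^2) * t ^ 2 + (a/6 + B/6*v) * t ^ 3 + (A/24) * t ^ 4 := by
    funext x; unfold hFun; ring
  rw [h1, (hasDerivAt_poly4 _ _ _ _ _ u).deriv]; ring

private lemma hv_eq (k a b c A B C D E u v : ℝ) :
    h_v k a b c A B C D E u v
      = k*v + b*u*v + c/2*v^2 + B/6*u^3 + C/2*u^2*v + D/2*u*v^2 + E/6*v^3 := by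
  unfold h_v
  have h1 : (fun y => hFun k a b c A B C D E u y)
      = fun t : ℝ => (k/2*u^2 + a/6*u^3 + A/24*u^4) + (B/6*u^3) * t
          + (k/2 + b/2*u + C/4*u^2) * t ^ 2 + (c/6 + D/6*u) * t ^ 3 + (E/24) * t ^ 4 := by
    funext y; unfold hFun; ring
  rw [h1, (hasDerivAt_poly4 _ _ _ _ _ v).deriv]; ring

private lemma huu_eq (k a b c A B C D E u v : ℝ) :
    h_uu k a b c A B C D E u v = k + a*u + A/2*u^2 + B*u*v + C/2*v^2 := by
  unfold h_uu
  have h1 : (fun x => h_u k a b c A B C D E x v)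
      = fun t : ℝ => (b/2*v^2 + D/6*v^3) + (k + C/2*v^2) * t + (a/2 + B/2*v) * t ^ 2
          + (A/6) * t ^ 3 + (0:ℝ) * t ^ 4 := by
    funext x; rw [hu_eq]; ring
  rw [h1, (hasDerivAt_poly4 _ _ _ _ _ u).deriv]; ring

private lemma huv_eq (k a b c A B C D E u v : ℝ) :
    h_uv k a b c A B C D E u v = b*v + B/2*u^2 + C*u*v + D/2*v^2 := by
  unfold h_uv
  have h1 : (fun y => h_u k a b c A B C D E u y)
      = fun t : ℝ => (k*u + a/2*u^2 + A/6*u^3) + (B/2*u^2) * t + (b/2 + C/2*u) * t ^ 2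
          + (D/6) * t ^ 3 + (0:ℝ) * t ^ 4 := by
    funext y; rw [hu_eq]; ring
  rw [h1, (hasDerivAt_poly4 _ _ _ _ _ v).deriv]; ring

private lemma hvv_eq (k a b c A B C D E u v : ℝ) :
    h_vv k a b c A B C D E u v = k + b*u + c*v + C/2*u^2 + D*u*v + E/2*v^2 := by
  unfold h_vv
  have h1 : (fun y => h_v k a b c A B C D E u y)
      = fun t : ℝ => (B/6*u^3) + (k + b*u + C/2*u^2) * t + (c/2 + D/2*u) * t ^ 2
          + (E/6) * t ^ 3 + (0:ℝ) * t ^ 4 := by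
    funext y; rw [hv_eq]; ring
  rw [h1, (hasDerivAt_poly4 _ _ _ _ _ v).deriv]; ring

private lemma cube3 (i j : ℕ) (h : i + j = 3) :
    (fun x : ℝ × ℝ => x.1 ^ i * x.2 ^ j) =o[𝓝 ((0:ℝ), (0:ℝ))]
      fun x : ℝ × ℝ => x.1 ^ 2 + x.2 ^ 2 := by
  rw [isLittleO_iff]
  intro ε hε
  filter_upwards [Metric.ball_mem_nhds ((0:ℝ), (0:ℝ)) (lt_min hε one_pos)] with x hx
  rw [Metric.mem_ball, dist_eq_norm, Prod.mk_zero_zero, sub_zero, lt_min_iff] at hx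
  obtain ⟨hxε, hx1⟩ := hx
  have h1 : |x.1| ≤ ‖x‖ := by simpa [Real.norm_eq_abs] using norm_fst_le x
  have h2 : |x.2| ≤ ‖x‖ := by simpa [Real.norm_eq_abs] using norm_snd_le x
  have hm2 : ‖x‖ ^ 2 ≤ x.1 ^ 2 + x.2 ^ 2 := by
    rw [Prod.norm_def]
    rcases max_choice ‖x.1‖ ‖x.2‖ with hmax | hmax <;> rw [hmax] <;>
      simp only [Real.norm_eq_abs, sq_abs] <;> nlinarith [sq_nonneg x.1, sq_nonneg x.2]
  have h0 : (0:ℝ) ≤ ‖x‖ := norm_nonneg x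
  have key : ‖x.1 ^ i * x.2 ^ j‖ ≤ ε * (x.1 ^ 2 + x.2 ^ 2) := by
    calc ‖x.1 ^ i * x.2 ^ j‖ = |x.1| ^ i * |x.2| ^ j := by
          rw [Real.norm_eq_abs, abs_mul, abs_pow, abs_pow]
      _ ≤ ‖x‖ ^ i * ‖x‖ ^ j := by gcongr
      _ = ‖x‖ * ‖x‖ ^ 2 := by rw [← pow_add, h]; ring
      _ ≤ ε * (x.1 ^ 2 + x.2 ^ 2) := by nlinarith [sq_nonneg ‖x‖]
  calc ‖x.1 ^ i * x.2 ^ j‖ ≤ ε * (x.1 ^ 2 + x.2 ^ 2) := key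
    _ = ε * ‖x.1 ^ 2 + x.2 ^ 2‖ := by
        rw [Real.norm_eq_abs, abs_of_nonneg (by positivity)]

private lemma cubeP (i j : ℕ) (h : i + j = 3) (P : ℝ × ℝ → ℝ) (hP : Continuous P) :
    (fun x : ℝ × ℝ => x.1 ^ i * x.2 ^ j * P x) =o[𝓝 ((0:ℝ), (0:ℝ))]
      fun x : ℝ × ℝ => x.1 ^ 2 + x.2 ^ 2 := by
  have hO : P =O[𝓝 ((0:ℝ), (0:ℝ))] (fun _ : ℝ × ℝ => (1:ℝ)) :=
    (hP.tendsto _).isBigO_one ℝ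
  simpa using (cube3 i j h).mul_isBigO hO

private lemma sum4 (P1 P2 P3 P4 : ℝ × ℝ → ℝ) (h1 : Continuous P1) (h2 : Continuous P2)
    (h3 : Continuous P3) (h4 : Continuous P4) :
    (fun x : ℝ × ℝ => x.1 ^ 3 * P1 x + x.1 ^ 2 * x.2 * P2 x + x.1 * x.2 ^ 2 * P3 x
        + x.2 ^ 3 * P4 x)
      =o[𝓝 ((0:ℝ), (0:ℝ))] fun x : ℝ × ℝ => x.1 ^ 2 + x.2 ^ 2 := by
  have e1 : (fun x : ℝ × ℝ => x.1 ^ 3 * P1 x)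
      = fun x : ℝ × ℝ => x.1 ^ 3 * x.2 ^ 0 * P1 x := by funext x; ring
  have e2 : (fun x : ℝ × ℝ => x.1 ^ 2 * x.2 * P2 x)
      = fun x : ℝ × ℝ => x.1 ^ 2 * x.2 ^ 1 * P2 x := by funext x; ring
  have e3 : (fun x : ℝ × ℝ => x.1 * x.2 ^ 2 * P3 x)
      = fun x : ℝ × ℝ => x.1 ^ 1 * x.2 ^ 2 * P3 x := by funext x; ring
  have e4 : (fun x : ℝ × ℝ => x.2 ^ 3 * P4 x)
      = fun x : ℝ × ℝ => x.1 ^ 0 * x.2 ^ 3 * P4 x := by funext x; ring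
  have t1 := cubeP 3 0 rfl P1 h1
  have t2 := cubeP 2 1 rfl P2 h2
  have t3 := cubeP 1 2 rfl P3 h3
  have t4 := cubeP 0 3 rfl P4 h4
  rw [← e1] at t1; rw [← e2] at t2; rw [← e3] at t3; rw [← e4] at t4
  exact ((t1.add t2).add t3).add t4

set_option maxHeartbeats 2000000 in
/-- Asymptotic expansions of `L`, `M`, `N` at the umbilic point `(0,0)`:
`L = −bv − (B/2)u² − (C−k³)uv − (D/2)v² + o(u²+v²)`,
`M = (b−a)u + cv + ((C−A)/2+k³)u² + (D−B)uv + ((E−C)/2−k³)v² + o(u²+v²)`,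
`N = bv + (B/2)u² + (C−k³)uv + (D/2)v² + o(u²+v²)`. -/
theorem stmt_2 (k a b c A B C D E : ℝ) :
    ((fun x : ℝ × ℝ => eqL k a b c A B C D E x.1 x.2 -
        (-(b * x.2) - B / 2 * x.1 ^ 2 - (C - k ^ 3) * x.1 * x.2 - D / 2 * x.2 ^ 2))
      =o[𝓝 (0, 0)] fun x : ℝ × ℝ => x.1 ^ 2 + x.2 ^ 2) ∧
    ((fun x : ℝ × ℝ => eqM k a b c A B C D E x.1 x.2 -
        ((b - a) * x.1 + c * x.2 + ((C - A) / 2 + k ^ 3) * x.1 ^ 2 + (D - B) * x.1 * x.2 +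
          ((E - C) / 2 - k ^ 3) * x.2 ^ 2))
      =o[𝓝 (0, 0)] fun x : ℝ × ℝ => x.1 ^ 2 + x.2 ^ 2) ∧
    ((fun x : ℝ × ℝ => eqN k a b c A B C D E x.1 x.2 -
        (b * x.2 + B / 2 * x.1 ^ 2 + (C - k ^ 3) * x.1 * x.2 + D / 2 * x.2 ^ 2))
      =o[𝓝 (0, 0)] fun x : ℝ × ℝ => x.1 ^ 2 + x.2 ^ 2) := by
  have hL : (fun x : ℝ × ℝ => eqL k a b c A B C D E x.1 x.2 - (-(b * x.2) - B / 2 * x.1 ^ 2 - (C - k ^ 3) * x.1 * x.2 - D / 2 * x.2 ^ 2))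
      = fun x : ℝ × ℝ => x.1 ^ 3 * ((((1)*k*b ^ 2 + (1)*k*a*b + (1)*k ^ 2*C + (1/6)*k ^ 2*A) * x.2 ^ 1 + ((3/4)*a*b*c + (3/4)*k*c*C + (1/4)*k*c*A + (3/2)*k*b*D + (-1/4)*k*b*B + (3/4)*k*a*D) * x.2 ^ 2 + ((1/12)*c ^ 2*A + (1/6)*b*c*B + (-1)*b ^ 2*C + (1/2)*a*c*D + (1/3)*a*b*E + (1/2)*k*D ^ 2 + (1/3)*k*C*E + (-1/2)*k*C ^ 2 + (1/9)*k*B*D + (1/9)*k*A*E) * x.2 ^ 3 + ((-1/8)*c*C ^ 2 + (7/36)*c*B*D + (5/72)*c*A*E + (-17/24)*b*C*D + (11/72)*b*B*E + (5/24)*a*D*E) * x.2 ^ 4 + ((-1/8)*C*D ^ 2 + (1/9)*B*D*E + (1/72)*A*E ^ 2) * x.2 ^ 5 + ((1/6)*k ^ 2*B) * x.1 ^ 1 + ((1/2)*a*b ^ 2 + (1/6)*k*c*B + (1)*k*b*C + (1/3)*k*b*A + (1/2)*k*a*C) * x.1 ^ 1 * x.2 ^ 1 + ((1/4)*b*c*A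 + (-1/4)*b ^ 2*B + (3/8)*a*c*C + (3/4)*a*b*D + (3/4)*k*C*D + (1/12)*k*B*E + (-1/4)*k*B*C + (1/4)*k*A*D) * x.1 ^ 1 * x.2 ^ 2 + ((1/24)*c*B*C + (1/6)*c*A*D + (-5/8)*b*C ^ 2 + (1/36)*b*B*D + (1/9)*b*A*E + (1/4)*a*D ^ 2 + (1/6)*a*C*E) * x.1 ^ 1 * x.2 ^ 3 + ((-5/24)*C ^ 2*D + (5/72)*B*D ^ 2 + (5/72)*B*C*E + (5/72)*A*D*E) * x.1 ^ 1 * x.2 ^ 4 + ((1/6)*k*b*B + (1/12)*k*a*B) * x.1 ^ 2 + ((1/6)*b ^ 2*A + (1/12)*a*c*B + (1/2)*a*b*C + (1/4)*k*C ^ 2 + (1/6)*k*B*D + (-1/12)*k*B ^ 2 + (1/6)*k*A*C) * x.1 ^ 2 * x.2 ^ 1 + ((1/8)*c*A*C + (-3/8)*b*B*C + (1/4)*b*A*D + (3/8)*a*C*D + (1/24)*a*B*E) * x.1 ^ 2 * x.2 ^ 2 + ((-1/8)*C ^ 3 + (-1/36)*B*C*D + (1/72)*B ^ 2*E + (1/12)*A*D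 ^ 2 + (1/18)*A*C*E) * x.1 ^ 2 * x.2 ^ 3 + ((1/12)*a*b*B + (1/12)*k*B*C + (1/36)*k*A*B) * x.1 ^ 3 + ((1/36)*c*A*B + (-1/9)*b*B ^ 2 + (1/6)*b*A*C + (1/8)*a*C ^ 2 + (1/12)*a*B*D) * x.1 ^ 3 * x.2 ^ 1 + ((-1/8)*B*C ^ 2 + (-1/72)*B ^ 2*D + (1/8)*A*C*D + (1/72)*A*B*E) * x.1 ^ 3 * x.2 ^ 2 + ((1/36)*b*A*B + (1/24)*a*B*C) * x.1 ^ 4 + ((-5/72)*B ^ 2*C + (1/24)*A*C ^ 2 + (1/36)*A*B*D) * x.1 ^ 4 * x.2 ^ 1 + ((-1/72)*B ^ 3 + (1/72)*A*B*C) * x.1 ^ 5)) + x.1 ^ 2 * x.2 * ((((2)*k ^ 2*b + (1/2)*k ^ 2*a) + ((3/2)*k*b*c + (3/4)*k*a*c + (3/2)*k ^ 2*D) * x.2 ^ 1 + ((-1/2)*b ^ 3 + (1/4)*a*c ^ 2 + (1)*k*c*D + (1/4)*k*c*B + (2/3)*k*b*E + (-3/2)*k*b*C + (1/3)*k*a*E)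 * x.2 ^ 2 + ((1/8)*c ^ 2*B + (-3/8)*b*c*C + (-7/12)*b ^ 2*D + (5/24)*a*c*E + (5/12)*k*D*E + (-7/12)*k*C*D + (1/6)*k*B*E) * x.2 ^ 3 + ((-1/8)*c*C*D + (1/8)*c*B*E + (-1/4)*b*D ^ 2 + (1/24)*a*E ^ 2) * x.2 ^ 4 + ((-1/24)*D ^ 3 + (1/72)*C*D*E + (1/36)*B*E ^ 2) * x.2 ^ 5))
          + x.1 * x.2 ^ 2 * ((((3/2)*k ^ 2*c) + ((1/2)*k*c ^ 2 + (-1)*k*b ^ 2 + (2/3)*k ^ 2*E + (-1/2)*k ^ 2*C) * x.2 ^ 1 + ((-1/4)*b ^ 2*c + (5/12)*k*c*E + (-1/4)*k*c*C + (-11/12)*k*b*D) * x.2 ^ 2 + ((-1/4)*b*c*D + (1/12)*k*E ^ 2 + (-1/4)*k*D ^ 2) * x.2 ^ 3 + ((-1/12)*c*D ^ 2 + (1/24)*c*C*E + (-1/72)*b*D*E) * x.2 ^ 4 + ((-1/72)*D ^ 2*E + (1/72)*C*E ^ 2) * x.2 ^ 5)) + x.2 ^ 3 * ((((-1/2)*k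 ^ 2*b) + ((-1/4)*k*b*c + (-1/3)*k ^ 2*D) * x.2 ^ 1 + ((-1/4)*k*c*D) * x.2 ^ 2 + ((-1/24)*c ^ 2*D + (1/24)*b*c*E + (-1/18)*k*D*E) * x.2 ^ 3 + ((-1/72)*c*D*E + (1/72)*b*E ^ 2) * x.2 ^ 4)) := by
    funext x
    simp only [eqL, hu_eq, hv_eq, huu_eq, huv_eq, hvv_eq]
    ring
  have tL := sum4 (fun x : ℝ × ℝ => (((1)*k*b ^ 2 + (1)*k*a*b + (1)*k ^ 2*C + (1/6)*k ^ 2*A) * x.2 ^ 1 + ((3/4)*a*b*c + (3/4)*k*c*C + (1/4)*k*c*A + (3/2)*k*b*D + (-1/4)*k*b*B + (3/4)*k*a*D) * x.2 ^ 2 + ((1/12)*c ^ 2*A + (1/6)*b*c*B + (-1)*b ^ 2*C + (1/2)*a*c*D + (1/3)*a*b*E + (1/2)*k*D ^ 2 + (1/3)*k*C*E + (-1/2)*k*C ^ 2 + (1/9)*k*B*D + (1/9)*k*A*E) * x.2 ^ 3 + ((-1/8)*c*C ^ 2 + (7/36)*c*B*D + (5/72)*c*A*E + (-17/24)*b*C*D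 + (11/72)*b*B*E + (5/24)*a*D*E) * x.2 ^ 4 + ((-1/8)*C*D ^ 2 + (1/9)*B*D*E + (1/72)*A*E ^ 2) * x.2 ^ 5 + ((1/6)*k ^ 2*B) * x.1 ^ 1 + ((1/2)*a*b ^ 2 + (1/6)*k*c*B + (1)*k*b*C + (1/3)*k*b*A + (1/2)*k*a*C) * x.1 ^ 1 * x.2 ^ 1 + ((1/4)*b*c*A + (-1/4)*b ^ 2*B + (3/8)*a*c*C + (3/4)*a*b*D + (3/4)*k*C*D + (1/12)*k*B*E + (-1/4)*k*B*C + (1/4)*k*A*D) * x.1 ^ 1 * x.2 ^ 2 + ((1/24)*c*B*C + (1/6)*c*A*D + (-5/8)*b*C ^ 2 + (1/36)*b*B*D + (1/9)*b*A*E + (1/4)*a*D ^ 2 + (1/6)*a*C*E) * x.1 ^ 1 * x.2 ^ 3 + ((-5/24)*C ^ 2*D + (5/72)*B*D ^ 2 + (5/72)*B*C*E + (5/72)*A*D*E) * x.1 ^ 1 * x.2 ^ 4 + ((1/6)*k*b*B + (1/12)*k*a*B) * x.1 ^ 2 + ((1/6)*b ^ 2*A + (1/12)*a*c*B + (1/2)*a*b*C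 + (1/4)*k*C ^ 2 + (1/6)*k*B*D + (-1/12)*k*B ^ 2 + (1/6)*k*A*C) * x.1 ^ 2 * x.2 ^ 1 + ((1/8)*c*A*C + (-3/8)*b*B*C + (1/4)*b*A*D + (3/8)*a*C*D + (1/24)*a*B*E) * x.1 ^ 2 * x.2 ^ 2 + ((-1/8)*C ^ 3 + (-1/36)*B*C*D + (1/72)*B ^ 2*E + (1/12)*A*D ^ 2 + (1/18)*A*C*E) * x.1 ^ 2 * x.2 ^ 3 + ((1/12)*a*b*B + (1/12)*k*B*C + (1/36)*k*A*B) * x.1 ^ 3 + ((1/36)*c*A*B + (-1/9)*b*B ^ 2 + (1/6)*b*A*C + (1/8)*a*C ^ 2 + (1/12)*a*B*D) * x.1 ^ 3 * x.2 ^ 1 + ((-1/8)*B*C ^ 2 + (-1/72)*B ^ 2*D + (1/8)*A*C*D + (1/72)*A*B*E) * x.1 ^ 3 * x.2 ^ 2 + ((1/36)*b*A*B + (1/24)*a*B*C) * x.1 ^ 4 + ((-5/72)*B ^ 2*C + (1/24)*A*C ^ 2 + (1/36)*A*B*D) * x.1 ^ 4 * x.2 ^ 1 + ((-1/72)*B ^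 3 + (1/72)*A*B*C) * x.1 ^ 5)) (fun x : ℝ × ℝ => (((2)*k ^ 2*b + (1/2)*k ^ 2*a) + ((3/2)*k*b*c + (3/4)*k*a*c + (3/2)*k ^ 2*D) * x.2 ^ 1 + ((-1/2)*b ^ 3 + (1/4)*a*c ^ 2 + (1)*k*c*D + (1/4)*k*c*B + (2/3)*k*b*E + (-3/2)*k*b*C + (1/3)*k*a*E) * x.2 ^ 2 + ((1/8)*c ^ 2*B + (-3/8)*b*c*C + (-7/12)*b ^ 2*D + (5/24)*a*c*E + (5/12)*k*D*E + (-7/12)*k*C*D + (1/6)*k*B*E) * x.2 ^ 3 + ((-1/8)*c*C*D + (1/8)*c*B*E + (-1/4)*b*D ^ 2 + (1/24)*a*E ^ 2) * x.2 ^ 4 + ((-1/24)*D ^ 3 + (1/72)*C*D*E + (1/36)*B*E ^ 2) * x.2 ^ 5))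
    (fun x : ℝ × ℝ => (((3/2)*k ^ 2*c) + ((1/2)*k*c ^ 2 + (-1)*k*b ^ 2 + (2/3)*k ^ 2*E + (-1/2)*k ^ 2*C) * x.2 ^ 1 + ((-1/4)*b ^ 2*c + (5/12)*k*c*E + (-1/4)*k*c*C + (-11/12)*k*b*D) * x.2 ^ 2 + ((-1/4)*b*c*D + (1/12)*k*E ^ 2 + (-1/4)*k*D ^ 2) * x.2 ^ 3 + ((-1/12)*c*D ^ 2 + (1/24)*c*C*E + (-1/72)*b*D*E) * x.2 ^ 4 + ((-1/72)*D ^ 2*E + (1/72)*C*E ^ 2) * x.2 ^ 5)) (fun x : ℝ × ℝ => (((-1/2)*k ^ 2*b) + ((-1/4)*k*b*c + (-1/3)*k ^ 2*D) * x.2 ^ 1 + ((-1/4)*k*c*D) * x.2 ^ 2 + ((-1/24)*c ^ 2*D + (1/24)*b*c*E + (-1/18)*k*D*E) * x.2 ^ 3 + ((-1/72)*c*D*E + (1/72)*b*E ^ 2) * x.2 ^ 4))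
    (by fun_prop) (by fun_prop) (by fun_prop) (by fun_prop)
  rw [← hL] at tL
  have hM : (fun x : ℝ × ℝ => eqM k a b c A B C D E x.1 x.2 - ((b - a) * x.1 + c * x.2 + ((C - A) / 2 + k ^ 3) * x.1 ^ 2 + (D - B) * x.1 * x.2 + ((E - C) / 2 - k ^ 3) * x.2 ^ 2))
      = fun x : ℝ × ℝ => x.1 ^ 3 * ((((1)*k ^ 2*b + (1)*k ^ 2*a) + ((1)*k*a*c + (1)*k ^ 2*D + (2/3)*k ^ 2*B) * x.2 ^ 1 + ((-1/2)*a*b ^ 2 + (5/6)*k*c*B + (1/2)*k*b*C + (-5/6)*k*b*A + (1/2)*k*a*E + (-1/2)*k*a*C) * x.2 ^ 2 + ((-1/3)*b*c*A + (-1/2)*b ^ 2*B + (-1/3)*a*b*D + (2/3)*k*C*D + (4/9)*k*B*E + (-2/3)*k*B*C + (-4/9)*k*A*D) * x.2 ^ 3 + ((-1/12)*c*B*C + (-7/36)*c*A*D + (-1/3)*b*B*D + (-1/12)*b*A*E + (-1/12)*a*D ^ 2 + (1/12)*a*C*E) * x.2 ^ 4 + ((1/12)*C ^ 2*D + (-1/12)*B*D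 ^ 2 + (1/18)*B*C*E + (-1/18)*A*D*E) * x.2 ^ 5 + ((1)*k*a*b + (1/4)*k*a ^ 2 + (1/2)*k ^ 2*C + (1/3)*k ^ 2*A) * x.1 ^ 1 + ((1/4)*a ^ 2*c + (1/3)*k*c*A + (2/3)*k*b*B + (1)*k*a*D + (1/6)*k*a*B) * x.1 ^ 1 * x.2 ^ 1 + ((-1/3)*b ^ 2*A + (1/3)*a*c*B + (-1/4)*a*b*C + (1/8)*a ^ 2*E + (1/4)*k*C ^ 2 + (5/6)*k*B*D + (-1/12)*k*B ^ 2 + (1/6)*k*A*E + (-1/3)*k*A*C) * x.1 ^ 1 * x.2 ^ 2 + ((1/12)*c*B ^ 2 + (-1/12)*c*A*C + (-5/12)*b*B*C + (-5/18)*b*A*D + (1/12)*a*C*D + (7/36)*a*B*E) * x.1 ^ 1 * x.2 ^ 3 + ((5/72)*B ^ 2*E + (-5/72)*A*D ^ 2) * x.1 ^ 1 * x.2 ^ 4 + ((1/4)*a ^ 2*b + (1/3)*k*b*A + (1/2)*k*a*C + (1/6)*k*a*A) * x.1 ^ 2 + ((1/6)*a*c*A + (1/6)*a*b*B + (1/4)*a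 ^ 2*D + (1/3)*k*B*C + (1/3)*k*A*D) * x.1 ^ 2 * x.2 ^ 1 + ((1/12)*c*A*B + (-1/12)*b*B ^ 2 + (-1/4)*b*A*C + (1/3)*a*B*D + (1/12)*a*A*E) * x.1 ^ 2 * x.2 ^ 2 + ((-1/12)*B*C ^ 2 + (1/12)*B ^ 2*D + (-1/18)*A*C*D + (1/18)*A*B*E) * x.1 ^ 2 * x.2 ^ 3 + ((1/6)*a*b*A + (1/8)*a ^ 2*C + (-1/36)*k*B ^ 2 + (1/6)*k*A*C + (1/36)*k*A ^ 2) * x.1 ^ 3 + ((1/36)*c*A ^ 2 + (1/12)*a*B*C + (1/6)*a*A*D) * x.1 ^ 3 * x.2 ^ 1 + ((-1/18)*B ^ 2*C + (-1/24)*A*C ^ 2 + (1/12)*A*B*D + (1/72)*A ^ 2*E) * x.1 ^ 3 * x.2 ^ 2 + ((1/36)*b*A ^ 2 + (-1/36)*a*B ^ 2 + (1/12)*a*A*C) * x.1 ^ 4 + ((-1/36)*B ^ 3 + (1/36)*A ^ 2*D) * x.1 ^ 4 * x.2 ^ 1 + ((-1/72)*A*B ^ 2 + (1/72)*A ^ 2*C)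 * x.1 ^ 5)) + x.1 ^ 2 * x.2 * ((((1)*k ^ 2*c) + ((-3/2)*k*a*b + (1/2)*k ^ 2*E + (-1/2)*k ^ 2*A) * x.2 ^ 1 + ((-1/2)*a*b*c + (1/2)*k*c*C + (-1/2)*k*c*A + (1/3)*k*b*D + (-3/2)*k*b*B + (-5/6)*k*a*D) * x.2 ^ 2 + ((-1/8)*c ^ 2*A + (-1/2)*b*c*B + (1/8)*b ^ 2*C + (-1/3)*a*c*D + (-1/12)*a*b*E + (1/12)*k*D ^ 2 + (1/3)*k*C*E + (-1/4)*k*C ^ 2 + (-5/6)*k*B*D + (-1/6)*k*A*E) * x.2 ^ 3 + ((-1/3)*c*B*D + (-1/12)*c*A*E + (1/4)*b*C*D + (-1/12)*b*B*E + (-1/12)*a*D*E) * x.2 ^ 4 + ((1/18)*C*D ^ 2 + (1/24)*C ^ 2*E + (-1/12)*B*D*E + (-1/72)*A*E ^ 2) * x.2 ^ 5))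
          + x.1 * x.2 ^ 2 * ((((-1)*k ^ 2*b + (-1)*k ^ 2*a) + ((-1)*k*a*c + (-2/3)*k ^ 2*D + (-1)*k ^ 2*B) * x.2 ^ 1 + ((1/4)*b ^ 3 + (-1/4)*a*c ^ 2 + (-1/6)*k*c*D + (-1)*k*c*B + (1/6)*k*b*E + (-1/2)*k*b*C + (-1/3)*k*a*E) * x.2 ^ 2 + ((-1/4)*c ^ 2*B + (5/12)*b ^ 2*D + (-1/6)*a*c*E + (-1/3)*k*C*D + (-1/3)*k*B*E) * x.2 ^ 3 + ((-1/12)*c*C*D + (-1/6)*c*B*E + (7/36)*b*D ^ 2 + (1/12)*b*C*E + (-1/36)*a*E ^ 2) * x.2 ^ 4 + ((1/36)*D ^ 3 + (-1/36)*B*E ^ 2) * x.2 ^ 5)) + x.2 ^ 3 * ((((-1)*k ^ 2*c) + ((-1/4)*k*c ^ 2 + (1/4)*k*b ^ 2 + (-1/3)*k ^ 2*E + (-1/2)*k ^ 2*C) * x.2 ^ 1 + ((1/4)*b ^ 2*c + (-1/6)*k*c*E + (-1/2)*k*c*C + (1/6)*k*b*D) * x.2 ^ 2 + ((-1/8)*c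 ^ 2*C + (1/6)*b*c*D + (1/8)*b ^ 2*E + (-1/36)*k*E ^ 2 + (1/36)*k*D ^ 2 + (-1/6)*k*C*E) * x.2 ^ 3 + ((1/36)*c*D ^ 2 + (-1/12)*c*C*E + (1/12)*b*D*E) * x.2 ^ 4 + ((1/72)*D ^ 2*E + (-1/72)*C*E ^ 2) * x.2 ^ 5)) := by
    funext x
    simp only [eqM, hu_eq, hv_eq, huu_eq, huv_eq, hvv_eq]
    ring
  have tM := sum4 (fun x : ℝ × ℝ => (((1)*k ^ 2*b + (1)*k ^ 2*a) + ((1)*k*a*c + (1)*k ^ 2*D + (2/3)*k ^ 2*B) * x.2 ^ 1 + ((-1/2)*a*b ^ 2 + (5/6)*k*c*B + (1/2)*k*b*C + (-5/6)*k*b*A + (1/2)*k*a*E + (-1/2)*k*a*C) * x.2 ^ 2 + ((-1/3)*b*c*A + (-1/2)*b ^ 2*B + (-1/3)*a*b*D + (2/3)*k*C*D + (4/9)*k*B*E + (-2/3)*k*B*C + (-4/9)*k*A*D) * x.2 ^ 3 + ((-1/12)*c*B*C + (-7/36)*c*A*D + (-1/3)*b*B*D + (-1/12)*b*A*E + (-1/12)*a*D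 ^ 2 + (1/12)*a*C*E) * x.2 ^ 4 + ((1/12)*C ^ 2*D + (-1/12)*B*D ^ 2 + (1/18)*B*C*E + (-1/18)*A*D*E) * x.2 ^ 5 + ((1)*k*a*b + (1/4)*k*a ^ 2 + (1/2)*k ^ 2*C + (1/3)*k ^ 2*A) * x.1 ^ 1 + ((1/4)*a ^ 2*c + (1/3)*k*c*A + (2/3)*k*b*B + (1)*k*a*D + (1/6)*k*a*B) * x.1 ^ 1 * x.2 ^ 1 + ((-1/3)*b ^ 2*A + (1/3)*a*c*B + (-1/4)*a*b*C + (1/8)*a ^ 2*E + (1/4)*k*C ^ 2 + (5/6)*k*B*D + (-1/12)*k*B ^ 2 + (1/6)*k*A*E + (-1/3)*k*A*C) * x.1 ^ 1 * x.2 ^ 2 + ((1/12)*c*B ^ 2 + (-1/12)*c*A*C + (-5/12)*b*B*C + (-5/18)*b*A*D + (1/12)*a*C*D + (7/36)*a*B*E) * x.1 ^ 1 * x.2 ^ 3 + ((5/72)*B ^ 2*E + (-5/72)*A*D ^ 2) * x.1 ^ 1 * x.2 ^ 4 + ((1/4)*a ^ 2*b + (1/3)*k*b*A + (1/2)*k*a*C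 + (1/6)*k*a*A) * x.1 ^ 2 + ((1/6)*a*c*A + (1/6)*a*b*B + (1/4)*a ^ 2*D + (1/3)*k*B*C + (1/3)*k*A*D) * x.1 ^ 2 * x.2 ^ 1 + ((1/12)*c*A*B + (-1/12)*b*B ^ 2 + (-1/4)*b*A*C + (1/3)*a*B*D + (1/12)*a*A*E) * x.1 ^ 2 * x.2 ^ 2 + ((-1/12)*B*C ^ 2 + (1/12)*B ^ 2*D + (-1/18)*A*C*D + (1/18)*A*B*E) * x.1 ^ 2 * x.2 ^ 3 + ((1/6)*a*b*A + (1/8)*a ^ 2*C + (-1/36)*k*B ^ 2 + (1/6)*k*A*C + (1/36)*k*A ^ 2) * x.1 ^ 3 + ((1/36)*c*A ^ 2 + (1/12)*a*B*C + (1/6)*a*A*D) * x.1 ^ 3 * x.2 ^ 1 + ((-1/18)*B ^ 2*C + (-1/24)*A*C ^ 2 + (1/12)*A*B*D + (1/72)*A ^ 2*E) * x.1 ^ 3 * x.2 ^ 2 + ((1/36)*b*A ^ 2 + (-1/36)*a*B ^ 2 + (1/12)*a*A*C) * x.1 ^ 4 + ((-1/36)*B ^ 3 + (1/36)*A ^ 2*D)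 * x.1 ^ 4 * x.2 ^ 1 + ((-1/72)*A*B ^ 2 + (1/72)*A ^ 2*C) * x.1 ^ 5)) (fun x : ℝ × ℝ => (((1)*k ^ 2*c) + ((-3/2)*k*a*b + (1/2)*k ^ 2*E + (-1/2)*k ^ 2*A) * x.2 ^ 1 + ((-1/2)*a*b*c + (1/2)*k*c*C + (-1/2)*k*c*A + (1/3)*k*b*D + (-3/2)*k*b*B + (-5/6)*k*a*D) * x.2 ^ 2 + ((-1/8)*c ^ 2*A + (-1/2)*b*c*B + (1/8)*b ^ 2*C + (-1/3)*a*c*D + (-1/12)*a*b*E + (1/12)*k*D ^ 2 + (1/3)*k*C*E + (-1/4)*k*C ^ 2 + (-5/6)*k*B*D + (-1/6)*k*A*E) * x.2 ^ 3 + ((-1/3)*c*B*D + (-1/12)*c*A*E + (1/4)*b*C*D + (-1/12)*b*B*E + (-1/12)*a*D*E) * x.2 ^ 4 + ((1/18)*C*D ^ 2 + (1/24)*C ^ 2*E + (-1/12)*B*D*E + (-1/72)*A*E ^ 2) * x.2 ^ 5))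
    (fun x : ℝ × ℝ => (((-1)*k ^ 2*b + (-1)*k ^ 2*a) + ((-1)*k*a*c + (-2/3)*k ^ 2*D + (-1)*k ^ 2*B) * x.2 ^ 1 + ((1/4)*b ^ 3 + (-1/4)*a*c ^ 2 + (-1/6)*k*c*D + (-1)*k*c*B + (1/6)*k*b*E + (-1/2)*k*b*C + (-1/3)*k*a*E) * x.2 ^ 2 + ((-1/4)*c ^ 2*B + (5/12)*b ^ 2*D + (-1/6)*a*c*E + (-1/3)*k*C*D + (-1/3)*k*B*E) * x.2 ^ 3 + ((-1/12)*c*C*D + (-1/6)*c*B*E + (7/36)*b*D ^ 2 + (1/12)*b*C*E + (-1/36)*a*E ^ 2) * x.2 ^ 4 + ((1/36)*D ^ 3 + (-1/36)*B*E ^ 2) * x.2 ^ 5)) (fun x : ℝ × ℝ => (((-1)*k ^ 2*c) + ((-1/4)*k*c ^ 2 + (1/4)*k*b ^ 2 + (-1/3)*k ^ 2*E + (-1/2)*k ^ 2*C) * x.2 ^ 1 + ((1/4)*b ^ 2*c + (-1/6)*k*c*E + (-1/2)*k*c*C + (1/6)*k*b*D) * x.2 ^ 2 + ((-1/8)*c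 ^ 2*C + (1/6)*b*c*D + (1/8)*b ^ 2*E + (-1/36)*k*E ^ 2 + (1/36)*k*D ^ 2 + (-1/6)*k*C*E) * x.2 ^ 3 + ((1/36)*c*D ^ 2 + (-1/12)*c*C*E + (1/12)*b*D*E) * x.2 ^ 4 + ((1/72)*D ^ 2*E + (-1/72)*C*E ^ 2) * x.2 ^ 5))
    (by fun_prop) (by fun_prop) (by fun_prop) (by fun_prop)
  rw [← hM] at tM
  have hN : (fun x : ℝ × ℝ => eqN k a b c A B C D E x.1 x.2 - (b * x.2 + B / 2 * x.1 ^ 2 + (C - k ^ 3) * x.1 * x.2 + D / 2 * x.2 ^ 2))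
      = fun x : ℝ × ℝ => x.1 ^ 3 * ((((-1/2)*k*a*b + (-1/2)*k*a ^ 2 + (1/2)*k ^ 2*C + (-2/3)*k ^ 2*A) * x.2 ^ 1 + ((-1/4)*a ^ 2*c + (-1/3)*k*c*A + (-1/12)*k*b*B + (-1/4)*k*a*D + (-1)*k*a*B) * x.2 ^ 2 + ((-1/12)*b ^ 2*A + (-1/2)*a*c*B + (-1/12)*a ^ 2*E + (1/2)*k*C ^ 2 + (-1/9)*k*B*D + (-1/2)*k*B ^ 2 + (-1/9)*k*A*E + (-1/3)*k*A*C) * x.2 ^ 3 + ((-1/4)*c*B ^ 2 + (-1/6)*c*A*C + (5/24)*b*B*C + (-5/72)*b*A*D + (-1/24)*a*C*D + (-1/6)*a*B*E) * x.2 ^ 4 + ((1/8)*C ^ 3 + (1/36)*B*C*D + (-1/12)*B ^ 2*E + (-1/72)*A*D ^ 2 + (-1/18)*A*C*E) * x.2 ^ 5 + ((1/3)*k ^ 2*B) * x.1 ^ 1 + ((-1/4)*a ^ 2*b + (-1/3)*k*b*A + (1/4)*k*a*C + (-5/12)*k*a*A) * x.1 ^ 1 * x.2 ^ 1 + ((-5/24)*a*c*A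 + (-1/3)*a*b*B + (-1/8)*a ^ 2*D + (7/12)*k*B*C + (-1/6)*k*A*D + (-5/12)*k*A*B) * x.1 ^ 1 * x.2 ^ 2 + ((-5/24)*c*A*B + (-1/12)*b*B ^ 2 + (-1/8)*b*A*C + (1/8)*a*C ^ 2 + (-7/36)*a*B*D + (-5/72)*a*A*E) * x.1 ^ 1 * x.2 ^ 3 + ((5/24)*B*C ^ 2 + (-5/72)*B ^ 2*D + (-5/72)*A*C*D + (-5/72)*A*B*E) * x.1 ^ 1 * x.2 ^ 4 + ((1/4)*k*a*B) * x.1 ^ 2 + ((-1/4)*a*b*A + (1/4)*k*B ^ 2 + (-1/12)*k*A ^ 2) * x.1 ^ 2 * x.2 ^ 1 + ((-1/24)*c*A ^ 2 + (-5/24)*b*A*B + (1/8)*a*B*C + (-1/8)*a*A*D) * x.1 ^ 2 * x.2 ^ 2 + ((1/8)*B ^ 2*C + (-1/9)*A*B*D + (-1/72)*A ^ 2*E) * x.1 ^ 2 * x.2 ^ 3 + ((1/24)*a ^ 2*B + (1/18)*k*A*B) * x.1 ^ 3 + ((-1/18)*b*A ^ 2 + (1/12)*a*B ^ 2 + (-1/24)*a*A*C)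 * x.1 ^ 3 * x.2 ^ 1 + ((1/24)*B ^ 3 + (-1/72)*A*B*C + (-1/36)*A ^ 2*D) * x.1 ^ 3 * x.2 ^ 2 + ((1/72)*a*A*B) * x.1 ^ 4 + ((1/72)*A*B ^ 2 + (-1/72)*A ^ 2*C) * x.1 ^ 4 * x.2 ^ 1)) + x.1 ^ 2 * x.2 * ((((-3/2)*k ^ 2*a) + ((-3/4)*k*a*c + (-3/2)*k ^ 2*B) * x.2 ^ 1 + ((-3/4)*k*c*B + (3/4)*k*b*C + (-1/4)*k*b*A + (-1/4)*k*a*E + (-3/4)*k*a*C) * x.2 ^ 2 + ((-1/8)*b*c*A + (1/8)*b ^ 2*B + (-3/8)*a*c*C + (1/4)*k*C*D + (-1/4)*k*B*E + (-3/4)*k*B*C + (-1/12)*k*A*D) * x.2 ^ 3 + ((-3/8)*c*B*C + (-1/24)*c*A*D + (3/8)*b*C ^ 2 + (1/12)*b*B*D + (-1/24)*b*A*E + (-1/8)*a*C*E) * x.2 ^ 4 + ((1/8)*C ^ 2*D + (1/72)*B*D ^ 2 + (-1/8)*B*C*E + (-1/72)*A*D*E) * x.2 ^ 5))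
          + x.1 * x.2 ^ 2 * ((((-1/2)*k ^ 2*c) + ((1/2)*k*b ^ 2 + (-1/2)*k*a*b + (-1/6)*k ^ 2*E + (-1)*k ^ 2*C) * x.2 ^ 1 + ((-1/4)*a*b*c + (-1/2)*k*c*C + (5/12)*k*b*D + (-1/2)*k*b*B + (-1/6)*k*a*D) * x.2 ^ 2 + ((-1/4)*b*c*B + (1/2)*b ^ 2*C + (-1/12)*a*c*D + (-1/12)*a*b*E + (1/12)*k*D ^ 2 + (-1/6)*k*C*E + (-1/4)*k*C ^ 2 + (-1/6)*k*B*D) * x.2 ^ 3 + ((-1/8)*c*C ^ 2 + (-1/12)*c*B*D + (3/8)*b*C*D + (-1/12)*b*B*E + (-1/36)*a*D*E) * x.2 ^ 4 + ((5/72)*C*D ^ 2 + (-1/24)*C ^ 2*E + (-1/36)*B*D*E) * x.2 ^ 5)) + x.2 ^ 3 * ((((-1/2)*k ^ 2*b) + ((-1/4)*k*b*c + (-1/6)*k ^ 2*D) * x.2 ^ 1 + ((1/4)*b ^ 3 + (-1/12)*k*c*D + (-1/12)*k*b*E + (-1/4)*k*b*C) * x.2 ^ 2 + ((-1/8)*b*c*C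 + (7/24)*b ^ 2*D + (-1/36)*k*D*E + (-1/12)*k*C*D) * x.2 ^ 3 + ((-1/24)*c*C*D + (1/9)*b*D ^ 2 + (-1/24)*b*C*E) * x.2 ^ 4 + ((1/72)*D ^ 3 + (-1/72)*C*D*E) * x.2 ^ 5)) := by
    funext x
    simp only [eqN, hu_eq, hv_eq, huu_eq, huv_eq, hvv_eq]
    ring
  have tN := sum4 (fun x : ℝ × ℝ => (((-1/2)*k*a*b + (-1/2)*k*a ^ 2 + (1/2)*k ^ 2*C + (-2/3)*k ^ 2*A) * x.2 ^ 1 + ((-1/4)*a ^ 2*c + (-1/3)*k*c*A + (-1/12)*k*b*B + (-1/4)*k*a*D + (-1)*k*a*B) * x.2 ^ 2 + ((-1/12)*b ^ 2*A + (-1/2)*a*c*B + (-1/12)*a ^ 2*E + (1/2)*k*C ^ 2 + (-1/9)*k*B*D + (-1/2)*k*B ^ 2 + (-1/9)*k*A*E + (-1/3)*k*A*C) * x.2 ^ 3 + ((-1/4)*c*B ^ 2 + (-1/6)*c*A*C + (5/24)*b*B*C + (-5/72)*b*A*D + (-1/24)*a*C*D + (-1/6)*a*B*E) * x.2 ^ 4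 + ((1/8)*C ^ 3 + (1/36)*B*C*D + (-1/12)*B ^ 2*E + (-1/72)*A*D ^ 2 + (-1/18)*A*C*E) * x.2 ^ 5 + ((1/3)*k ^ 2*B) * x.1 ^ 1 + ((-1/4)*a ^ 2*b + (-1/3)*k*b*A + (1/4)*k*a*C + (-5/12)*k*a*A) * x.1 ^ 1 * x.2 ^ 1 + ((-5/24)*a*c*A + (-1/3)*a*b*B + (-1/8)*a ^ 2*D + (7/12)*k*B*C + (-1/6)*k*A*D + (-5/12)*k*A*B) * x.1 ^ 1 * x.2 ^ 2 + ((-5/24)*c*A*B + (-1/12)*b*B ^ 2 + (-1/8)*b*A*C + (1/8)*a*C ^ 2 + (-7/36)*a*B*D + (-5/72)*a*A*E) * x.1 ^ 1 * x.2 ^ 3 + ((5/24)*B*C ^ 2 + (-5/72)*B ^ 2*D + (-5/72)*A*C*D + (-5/72)*A*B*E) * x.1 ^ 1 * x.2 ^ 4 + ((1/4)*k*a*B) * x.1 ^ 2 + ((-1/4)*a*b*A + (1/4)*k*B ^ 2 + (-1/12)*k*A ^ 2) * x.1 ^ 2 * x.2 ^ 1 + ((-1/24)*c*A ^ 2 +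 (-5/24)*b*A*B + (1/8)*a*B*C + (-1/8)*a*A*D) * x.1 ^ 2 * x.2 ^ 2 + ((1/8)*B ^ 2*C + (-1/9)*A*B*D + (-1/72)*A ^ 2*E) * x.1 ^ 2 * x.2 ^ 3 + ((1/24)*a ^ 2*B + (1/18)*k*A*B) * x.1 ^ 3 + ((-1/18)*b*A ^ 2 + (1/12)*a*B ^ 2 + (-1/24)*a*A*C) * x.1 ^ 3 * x.2 ^ 1 + ((1/24)*B ^ 3 + (-1/72)*A*B*C + (-1/36)*A ^ 2*D) * x.1 ^ 3 * x.2 ^ 2 + ((1/72)*a*A*B) * x.1 ^ 4 + ((1/72)*A*B ^ 2 + (-1/72)*A ^ 2*C) * x.1 ^ 4 * x.2 ^ 1)) (fun x : ℝ × ℝ => (((-3/2)*k ^ 2*a) + ((-3/4)*k*a*c + (-3/2)*k ^ 2*B) * x.2 ^ 1 + ((-3/4)*k*c*B + (3/4)*k*b*C + (-1/4)*k*b*A + (-1/4)*k*a*E + (-3/4)*k*a*C) * x.2 ^ 2 + ((-1/8)*b*c*A + (1/8)*b ^ 2*B + (-3/8)*a*c*C + (1/4)*k*C*D + (-1/4)*k*B*E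 + (-3/4)*k*B*C + (-1/12)*k*A*D) * x.2 ^ 3 + ((-3/8)*c*B*C + (-1/24)*c*A*D + (3/8)*b*C ^ 2 + (1/12)*b*B*D + (-1/24)*b*A*E + (-1/8)*a*C*E) * x.2 ^ 4 + ((1/8)*C ^ 2*D + (1/72)*B*D ^ 2 + (-1/8)*B*C*E + (-1/72)*A*D*E) * x.2 ^ 5))
    (fun x : ℝ × ℝ => (((-1/2)*k ^ 2*c) + ((1/2)*k*b ^ 2 + (-1/2)*k*a*b + (-1/6)*k ^ 2*E + (-1)*k ^ 2*C) * x.2 ^ 1 + ((-1/4)*a*b*c + (-1/2)*k*c*C + (5/12)*k*b*D + (-1/2)*k*b*B + (-1/6)*k*a*D) * x.2 ^ 2 + ((-1/4)*b*c*B + (1/2)*b ^ 2*C + (-1/12)*a*c*D + (-1/12)*a*b*E + (1/12)*k*D ^ 2 + (-1/6)*k*C*E + (-1/4)*k*C ^ 2 + (-1/6)*k*B*D) * x.2 ^ 3 + ((-1/8)*c*C ^ 2 + (-1/12)*c*B*D + (3/8)*b*C*D + (-1/12)*b*B*E + (-1/36)*a*D*E) * x.2 ^ 4 + ((5/72)*C*D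 ^ 2 + (-1/24)*C ^ 2*E + (-1/36)*B*D*E) * x.2 ^ 5)) (fun x : ℝ × ℝ => (((-1/2)*k ^ 2*b) + ((-1/4)*k*b*c + (-1/6)*k ^ 2*D) * x.2 ^ 1 + ((1/4)*b ^ 3 + (-1/12)*k*c*D + (-1/12)*k*b*E + (-1/4)*k*b*C) * x.2 ^ 2 + ((-1/8)*b*c*C + (7/24)*b ^ 2*D + (-1/36)*k*D*E + (-1/12)*k*C*D) * x.2 ^ 3 + ((-1/24)*c*C*D + (1/9)*b*D ^ 2 + (-1/24)*b*C*E) * x.2 ^ 4 + ((1/72)*D ^ 3 + (-1/72)*C*D*E) * x.2 ^ 5))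
    (by fun_prop) (by fun_prop) (by fun_prop) (by fun_prop)
  rw [← hN] at tN
  exact ⟨tL, tM, tN⟩
end
end

section
/- With h, L, M, N, T and the Lie–Cartan vector field X as in the context, for every p ∈ ℝ one has T(0,0,p) = 0, (∂T/∂p)(0,0,p) = 0, and X(0,0,p) = (0, 0, p·(b·p² − c·p + (a − 2b))). Consequently the projective line {(0,0,p) : p ∈ ℝ} is contained in the surface T = 0, is invariant under X, and the singular points of X on it are exactly the points (0,0,p) with p·(b·p² − c·p + a − 2b) = 0. -/
open Asymptotics Filter Topology

noncomputable section

private lemma hasDerivAt_quartic (c₀ c₁ c₂ c₃ c₄ x : ℝ) :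
    HasDerivAt (fun t : ℝ => c₀ + c₁ * t + c₂ * t ^ 2 + c₃ * t ^ 3 + c₄ * t ^ 4)
      (c₁ + 2 * c₂ * x + 3 * c₃ * x ^ 2 + 4 * c₄ * x ^ 3) x := by
  have h :=
    (((((hasDerivAt_const x c₀).add ((hasDerivAt_id x).const_mul c₁)).add
        ((hasDerivAt_pow 2 x).const_mul c₂)).add
        ((hasDerivAt_pow 3 x).const_mul c₃)).add
        ((hasDerivAt_pow 4 x).const_mul c₄))
  refine h.congr_deriv ?_
  push_cast
  ring

private lemma hasDerivAt_quartic0 (c₀ c₁ c₂ c₃ c₄ : ℝ) :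
    HasDerivAt (fun t : ℝ => c₀ + c₁ * t + c₂ * t ^ 2 + c₃ * t ^ 3 + c₄ * t ^ 4) c₁ 0 := by
  simpa using hasDerivAt_quartic c₀ c₁ c₂ c₃ c₄ 0

private lemma h_u_eq (k a b c A B C D E u v : ℝ) :
    h_u k a b c A B C D E u v
      = k * u + a / 2 * u ^ 2 + b / 2 * v ^ 2 + A / 6 * u ^ 3 + B / 2 * u ^ 2 * v
        + C / 2 * u * v ^ 2 + D / 6 * v ^ 3 := by
  have hfe : (fun x => hFun k a b c A B C D E x v)
      = fun t : ℝ => (k / 2 * v ^ 2 + c / 6 * v ^ 3 + E / 24 * v ^ 4)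
          + (b / 2 * v ^ 2 + D / 6 * v ^ 3) * t + (k / 2 + C / 4 * v ^ 2) * t ^ 2
          + (a / 6 + B / 6 * v) * t ^ 3 + (A / 24) * t ^ 4 := by
    funext t; simp only [hFun]; ring
  rw [h_u, hfe, (hasDerivAt_quartic _ _ _ _ _ u).deriv]; ring

private lemma h_v_eq (k a b c A B C D E u v : ℝ) :
    h_v k a b c A B C D E u v
      = B / 6 * u ^ 3 + k * v + b * u * v + C / 2 * u ^ 2 * v + c / 2 * v ^ 2
        + D / 2 * u * v ^ 2 + E / 6 * v ^ 3 := by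
  have hfe : (fun y => hFun k a b c A B C D E u y)
      = fun t : ℝ => (k / 2 * u ^ 2 + a / 6 * u ^ 3 + A / 24 * u ^ 4)
          + (B / 6 * u ^ 3) * t + (k / 2 + b / 2 * u + C / 4 * u ^ 2) * t ^ 2
          + (c / 6 + D / 6 * u) * t ^ 3 + (E / 24) * t ^ 4 := by
    funext t; simp only [hFun]; ring
  rw [h_v, hfe, (hasDerivAt_quartic _ _ _ _ _ v).deriv]; ring

private lemma h_uu_eq (k a b c A B C D E u v : ℝ) :
    h_uu k a b c A B C D E u v
      = k + C / 2 * v ^ 2 + a * u + B * u * v + A / 2 * u ^ 2 := by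
  have hfe : (fun x => h_u k a b c A B C D E x v)
      = fun t : ℝ => (b / 2 * v ^ 2 + D / 6 * v ^ 3) + (k + C / 2 * v ^ 2) * t
          + (a / 2 + B / 2 * v) * t ^ 2 + (A / 6) * t ^ 3 + 0 * t ^ 4 := by
    funext t; rw [h_u_eq]; ring
  rw [h_uu, hfe, (hasDerivAt_quartic _ _ _ _ _ u).deriv]; ring

private lemma h_uv_eq (k a b c A B C D E u v : ℝ) :
    h_uv k a b c A B C D E u v
      = B / 2 * u ^ 2 + b * v + C * u * v + D / 2 * v ^ 2 := by
  have hfe : (fun y => h_u k a b c A B C D E u y)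
      = fun t : ℝ => (k * u + a / 2 * u ^ 2 + A / 6 * u ^ 3) + (B / 2 * u ^ 2) * t
          + (b / 2 + C / 2 * u) * t ^ 2 + (D / 6) * t ^ 3 + 0 * t ^ 4 := by
    funext t; rw [h_u_eq]; ring
  rw [h_uv, hfe, (hasDerivAt_quartic _ _ _ _ _ v).deriv]; ring

private lemma h_vv_eq (k a b c A B C D E u v : ℝ) :
    h_vv k a b c A B C D E u v
      = k + b * u + C / 2 * u ^ 2 + c * v + D * u * v + E / 2 * v ^ 2 := by
  have hfe : (fun y => h_v k a b c A B C D E u y)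
      = fun t : ℝ => (B / 6 * u ^ 3) + (k + b * u + C / 2 * u ^ 2) * t
          + (c / 2 + D / 2 * u) * t ^ 2 + (E / 6) * t ^ 3 + 0 * t ^ 4 := by
    funext t; rw [h_v_eq]; ring
  rw [h_vv, hfe, (hasDerivAt_quartic _ _ _ _ _ v).deriv]; ring

private lemma eqT_zero (k a b c A B C D E q : ℝ) :
    eqT k a b c A B C D E 0 0 q = 0 := by
  simp [eqT, eqL, eqM, eqN, h_u_eq, h_v_eq, h_uu_eq, h_uv_eq, h_vv_eq]

private lemma eqT_u_val (k a b c A B C D E p : ℝ) :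
    eqT_u k a b c A B C D E 0 0 p = (b - a) * p := by
  have Hu : HasDerivAt (fun x => h_u k a b c A B C D E x 0) k 0 := by
    have hfe : (fun x => h_u k a b c A B C D E x 0)
        = fun t : ℝ => 0 + k * t + (a / 2) * t ^ 2 + (A / 6) * t ^ 3 + 0 * t ^ 4 := by
      funext t; rw [h_u_eq]; ring
    rw [hfe]; exact hasDerivAt_quartic0 _ _ _ _ _
  have Hv : HasDerivAt (fun x => h_v k a b c A B C D E x 0) 0 0 := by
    have hfe : (fun x => h_v k a b c A B C D E x 0)
        = fun t : ℝ => 0 + 0 * t + 0 * t ^ 2 + (B / 6) * t ^ 3 + 0 * t ^ 4 := by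
      funext t; rw [h_v_eq]; ring
    rw [hfe]; exact hasDerivAt_quartic0 _ _ _ _ _
  have Huu : HasDerivAt (fun x => h_uu k a b c A B C D E x 0) a 0 := by
    have hfe : (fun x => h_uu k a b c A B C D E x 0)
        = fun t : ℝ => k + a * t + (A / 2) * t ^ 2 + 0 * t ^ 3 + 0 * t ^ 4 := by
      funext t; rw [h_uu_eq]; ring
    rw [hfe]; exact hasDerivAt_quartic0 _ _ _ _ _
  have Huv : HasDerivAt (fun x => h_uv k a b c A B C D E x 0) 0 0 := by
    have hfe : (fun x => h_uv k a b c A B C D E x 0)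
        = fun t : ℝ => 0 + 0 * t + (B / 2) * t ^ 2 + 0 * t ^ 3 + 0 * t ^ 4 := by
      funext t; rw [h_uv_eq]; ring
    rw [hfe]; exact hasDerivAt_quartic0 _ _ _ _ _
  have Hvv : HasDerivAt (fun x => h_vv k a b c A B C D E x 0) b 0 := by
    have hfe : (fun x => h_vv k a b c A B C D E x 0)
        = fun t : ℝ => k + b * t + (C / 2) * t ^ 2 + 0 * t ^ 3 + 0 * t ^ 4 := by
      funext t; rw [h_vv_eq]; ring
    rw [hfe]; exact hasDerivAt_quartic0 _ _ _ _ _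
  have HL := ((Hu.mul Hv).mul Hvv).sub (((Hv.pow 2).const_add 1).mul Huv)
  have HM := (((Hu.pow 2).const_add 1).mul Hvv).sub (((Hv.pow 2).const_add 1).mul Huu)
  have HN := (((Hu.pow 2).const_add 1).mul Huv).sub ((Hu.mul Hv).mul Huu)
  have H := (HL.mul_const (p ^ 2)).add ((HM.mul_const p).add HN)
  have H2 := H.congr_of_eventuallyEq (f₁ := fun x => eqT k a b c A B C D E x 0 p)
    (Filter.Eventually.of_forall fun x => by simp only [eqT, eqL, eqM, eqN, Pi.add_apply, Pi.sub_apply, Pi.mul_apply, Pi.pow_apply]; ring)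
  rw [eqT_u, H2.deriv]
  simp only [h_u_eq, h_v_eq, h_uu_eq, h_uv_eq, h_vv_eq, Pi.mul_apply, Pi.pow_apply]
  ring

private lemma eqT_v_val (k a b c A B C D E p : ℝ) :
    eqT_v k a b c A B C D E 0 0 p = -b * p ^ 2 + c * p + b := by
  have Hu : HasDerivAt (fun y => h_u k a b c A B C D E 0 y) 0 0 := by
    have hfe : (fun y => h_u k a b c A B C D E 0 y)
        = fun t : ℝ => 0 + 0 * t + (b / 2) * t ^ 2 + (D / 6) * t ^ 3 + 0 * t ^ 4 := by
      funext t; rw [h_u_eq]; ring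
    rw [hfe]; exact hasDerivAt_quartic0 _ _ _ _ _
  have Hv : HasDerivAt (fun y => h_v k a b c A B C D E 0 y) k 0 := by
    have hfe : (fun y => h_v k a b c A B C D E 0 y)
        = fun t : ℝ => 0 + k * t + (c / 2) * t ^ 2 + (E / 6) * t ^ 3 + 0 * t ^ 4 := by
      funext t; rw [h_v_eq]; ring
    rw [hfe]; exact hasDerivAt_quartic0 _ _ _ _ _
  have Huu : HasDerivAt (fun y => h_uu k a b c A B C D E 0 y) 0 0 := by
    have hfe : (fun y => h_uu k a b c A B C D E 0 y)
        = fun t : ℝ => k + 0 * t + (C / 2) * t ^ 2 + 0 * t ^ 3 + 0 * t ^ 4 := by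
      funext t; rw [h_uu_eq]; ring
    rw [hfe]; exact hasDerivAt_quartic0 _ _ _ _ _
  have Huv : HasDerivAt (fun y => h_uv k a b c A B C D E 0 y) b 0 := by
    have hfe : (fun y => h_uv k a b c A B C D E 0 y)
        = fun t : ℝ => 0 + b * t + (D / 2) * t ^ 2 + 0 * t ^ 3 + 0 * t ^ 4 := by
      funext t; rw [h_uv_eq]; ring
    rw [hfe]; exact hasDerivAt_quartic0 _ _ _ _ _
  have Hvv : HasDerivAt (fun y => h_vv k a b c A B C D E 0 y) c 0 := by
    have hfe : (fun y => h_vv k a b c A B C D E 0 y)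
        = fun t : ℝ => k + c * t + (E / 2) * t ^ 2 + 0 * t ^ 3 + 0 * t ^ 4 := by
      funext t; rw [h_vv_eq]; ring
    rw [hfe]; exact hasDerivAt_quartic0 _ _ _ _ _
  have HL := ((Hu.mul Hv).mul Hvv).sub (((Hv.pow 2).const_add 1).mul Huv)
  have HM := (((Hu.pow 2).const_add 1).mul Hvv).sub (((Hv.pow 2).const_add 1).mul Huu)
  have HN := (((Hu.pow 2).const_add 1).mul Huv).sub ((Hu.mul Hv).mul Huu)
  have H := (HL.mul_const (p ^ 2)).add ((HM.mul_const p).add HN)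
  have H2 := H.congr_of_eventuallyEq (f₁ := fun y => eqT k a b c A B C D E 0 y p)
    (Filter.Eventually.of_forall fun y => by simp only [eqT, eqL, eqM, eqN, Pi.add_apply, Pi.sub_apply, Pi.mul_apply, Pi.pow_apply]; ring)
  rw [eqT_v, H2.deriv]
  simp only [h_u_eq, h_v_eq, h_uu_eq, h_uv_eq, h_vv_eq, Pi.mul_apply, Pi.pow_apply]
  ring

/-- For every `p`, `T(0,0,p) = 0`, `T_p(0,0,p) = 0`, and
`X(0,0,p) = (0, 0, p(bp² − cp + (a−2b)))`.  Consequently the projective line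
`{(0,0,p)}` lies in the surface `T = 0`, is invariant under the Lie–Cartan field `X`,
and the singular points of `X` on it are exactly those with `p(bp² − cp + a − 2b) = 0`. -/
theorem stmt_3 (k a b c A B C D E : ℝ) (p : ℝ) :
    eqT k a b c A B C D E 0 0 p = 0 ∧
    eqT_p k a b c A B C D E 0 0 p = 0 ∧
    lieCartan k a b c A B C D E (0, 0, p)
      = (0, 0, p * (b * p ^ 2 - c * p + (a - 2 * b))) ∧
    (lieCartan k a b c A B C D E (0, 0, p) = (0, 0, 0) ↔
      p * (b * p ^ 2 - c * p + (a - 2 * b)) = 0) := by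
  have hT0 : eqT k a b c A B C D E 0 0 p = 0 := eqT_zero k a b c A B C D E p
  have hTp : eqT_p k a b c A B C D E 0 0 p = 0 := by
    have hfe : (fun q => eqT k a b c A B C D E 0 0 q) = fun _ : ℝ => (0 : ℝ) :=
      funext fun q => eqT_zero k a b c A B C D E q
    rw [eqT_p, hfe, deriv_const]
  have hX : lieCartan k a b c A B C D E (0, 0, p)
      = (0, 0, p * (b * p ^ 2 - c * p + (a - 2 * b))) := by
    simp only [lieCartan, hTp, eqT_u_val, eqT_v_val, mul_zero]
    refine Prod.ext rfl (Prod.ext rfl ?_)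
    ring
  refine ⟨hT0, hTp, hX, ?_⟩
  rw [hX]
  constructor
  · intro h
    exact (Prod.ext_iff.mp ((Prod.ext_iff.mp h).2)).2
  · intro h
    rw [h]
end
end
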